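/- arXiv:math-ph/9812007 — 5 statements merged into one kernel-verified Lean document; each statement's English description precedes it below -/
import Mathlib

section
/- Let v : ℝ × ℝ³ → ℝ³ be a smooth divergence-free vector field and p : ℝ × ℝ³ → ℝ smooth with ∂v/∂t + (v·∇)v = −∇p on ℝ × ℝ³, and set w := ∇ × v. Then the helicity density h := v·w satisfies the Eulerian (divergence-form) conservation law ∂h/∂t + ∇·( (p + ½|v|²) w + v × (v × w) ) = 0 at every point of ℝ × ℝ³. -/
noncomputable section

open Matrix MeasureTheory

/-- Points of `ℝ³`, as functions `Fin 3 → ℝ`. -/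
abbrev V3 : Type := Fin 3 → ℝ

/-- The `i`-th standard basis vector of `ℝ³`. -/
def e3 (i : Fin 3) : V3 := Pi.single i 1

/-- Time derivative `∂f/∂t` of a time-dependent scalar field on `ℝ × ℝ³`. -/
def dtS (f : ℝ × V3 → ℝ) (q : ℝ × V3) : ℝ :=
  deriv (fun s => f (s, q.2)) q.1

/-- Spatial partial derivative `∂f/∂xᵢ` of a time-dependent scalar field. -/
def pd (i : Fin 3) (f : ℝ × V3 → ℝ) (q : ℝ × V3) : ℝ :=
  fderiv ℝ (fun y => f (q.1, y)) q.2 (e3 i)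

/-- Spatial gradient `∇f`. -/
def grad3 (f : ℝ × V3 → ℝ) (q : ℝ × V3) : V3 := fun i => pd i f q

/-- Time derivative `∂u/∂t` of a time-dependent vector field, componentwise. -/
def dtV (u : ℝ × V3 → V3) (q : ℝ × V3) : V3 := fun i => dtS (fun r => u r i) q

/-- Spatial divergence `∇·u`. -/
def div3 (u : ℝ × V3 → V3) (q : ℝ × V3) : ℝ := ∑ i, pd i (fun r => u r i) q

/-- Spatial curl `∇×u`. -/
def curl3 (u : ℝ × V3 → V3) (q : ℝ × V3) : V3 :=
  ![pd 1 (fun r => u r 2) q - pd 2 (fun r => u r 1) q,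
    pd 2 (fun r => u r 0) q - pd 0 (fun r => u r 2) q,
    pd 0 (fun r => u r 1) q - pd 1 (fun r => u r 0) q]

/-- Directional derivative `(v·∇)w` of a vector field along another. -/
def dirD (v w : ℝ × V3 → V3) (q : ℝ × V3) : V3 :=
  fun i => ∑ j, v q j * pd j (fun r => w r i) q

/-- Advective derivative `v·∇f` of a scalar field along `v`. -/
def adv (v : ℝ × V3 → V3) (f : ℝ × V3 → ℝ) (q : ℝ × V3) : ℝ :=
  ∑ j, v q j * pd j f q

lemma pd_eq {f : ℝ × V3 → ℝ} (hf : ContDiff ℝ (⊤ : ℕ∞) f) (i : Fin 3) (q : ℝ × V3) :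
    pd i f q = fderiv ℝ f q (0, e3 i) := by
  have h1 : HasFDerivAt (fun y : V3 => (q.1, y)) (ContinuousLinearMap.inr ℝ ℝ V3) q.2 :=
    (hasFDerivAt_const q.1 q.2).prodMk (hasFDerivAt_id q.2)
  have h2 := ((hf.differentiable (by simp) q).hasFDerivAt).comp q.2 h1
  have h2' : HasFDerivAt (fun y : V3 => f (q.1, y))
      ((fderiv ℝ f q).comp (ContinuousLinearMap.inr ℝ ℝ V3)) q.2 := h2
  simp only [pd, h2'.fderiv]
  rfl

lemma dtS_eq {f : ℝ × V3 → ℝ} (hf : ContDiff ℝ (⊤ : ℕ∞) f) (q : ℝ × V3) :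
    dtS f q = fderiv ℝ f q (1, 0) := by
  have h1 : HasFDerivAt (fun s : ℝ => (s, q.2)) (ContinuousLinearMap.inl ℝ ℝ V3) q.1 :=
    (hasFDerivAt_id q.1).prodMk (hasFDerivAt_const q.2 q.1)
  have h2 := ((hf.differentiable (by simp) q).hasFDerivAt).comp q.1 h1
  have h3 : HasDerivAt (fun s : ℝ => f (s, q.2))
      (((fderiv ℝ f q).comp (ContinuousLinearMap.inl ℝ ℝ V3)) 1) q.1 := h2.hasDerivAt
  simp only [dtS, h3.deriv]
  rfl

lemma rep_contDiff {f : ℝ × V3 → ℝ} (hf : ContDiff ℝ (⊤ : ℕ∞) f) (w : ℝ × V3) :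
    ContDiff ℝ (⊤ : ℕ∞) (fun r => fderiv ℝ f r w) :=
  (hf.fderiv_right (by simp)).clm_apply contDiff_const

lemma pd_contDiff {f : ℝ × V3 → ℝ} (hf : ContDiff ℝ (⊤ : ℕ∞) f) (i : Fin 3) :
    ContDiff ℝ (⊤ : ℕ∞) (fun r => pd i f r) := by
  have : (fun r => pd i f r) = fun r => fderiv ℝ f r (0, e3 i) := funext (pd_eq hf i)
  rw [this]; exact rep_contDiff hf _

lemma dtS_contDiff {f : ℝ × V3 → ℝ} (hf : ContDiff ℝ (⊤ : ℕ∞) f) :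
    ContDiff ℝ (⊤ : ℕ∞) (fun r => dtS f r) := by
  have : (fun r => dtS f r) = fun r => fderiv ℝ f r (1, 0) := funext (dtS_eq hf)
  rw [this]; exact rep_contDiff hf _

lemma slice_diff {f : ℝ × V3 → ℝ} (hf : ContDiff ℝ (⊤ : ℕ∞) f) (t : ℝ) :
    Differentiable ℝ (fun y : V3 => f (t, y)) :=
  (hf.comp (contDiff_const.prodMk contDiff_id)).differentiable (by simp)

lemma tslice_diff {f : ℝ × V3 → ℝ} (hf : ContDiff ℝ (⊤ : ℕ∞) f) (y : V3) :
    Differentiable ℝ (fun t : ℝ => f (t, y)) :=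
  (hf.comp (contDiff_id.prodMk contDiff_const)).differentiable (by simp)

lemma pd_mul {f g : ℝ × V3 → ℝ} (hf : ContDiff ℝ (⊤ : ℕ∞) f) (hg : ContDiff ℝ (⊤ : ℕ∞) g)
    (i : Fin 3) (q : ℝ × V3) :
    pd i (fun r => f r * g r) q = pd i f q * g q + f q * pd i g q := by
  simp only [pd]
  rw [fderiv_fun_mul (slice_diff hf q.1 q.2) (slice_diff hg q.1 q.2)]
  simp only [ContinuousLinearMap.add_apply, ContinuousLinearMap.smul_apply, smul_eq_mul]
  ring

lemma pd_add {f g : ℝ × V3 → ℝ} (hf : ContDiff ℝ (⊤ : ℕ∞) f) (hg : ContDiff ℝ (⊤ : ℕ∞) g)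
    (i : Fin 3) (q : ℝ × V3) :
    pd i (fun r => f r + g r) q = pd i f q + pd i g q := by
  simp only [pd]
  rw [fderiv_fun_add (slice_diff hf q.1 q.2) (slice_diff hg q.1 q.2)]
  simp

lemma pd_sub {f g : ℝ × V3 → ℝ} (hf : ContDiff ℝ (⊤ : ℕ∞) f) (hg : ContDiff ℝ (⊤ : ℕ∞) g)
    (i : Fin 3) (q : ℝ × V3) :
    pd i (fun r => f r - g r) q = pd i f q - pd i g q := by
  simp only [pd]
  rw [fderiv_fun_sub (slice_diff hf q.1 q.2) (slice_diff hg q.1 q.2)]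
  simp

lemma pd_neg {f : ℝ × V3 → ℝ} (i : Fin 3) (q : ℝ × V3) :
    pd i (fun r => -f r) q = - pd i f q := by
  simp only [pd, fderiv_neg]; simp

lemma pd_const_mul {f : ℝ × V3 → ℝ} (hf : ContDiff ℝ (⊤ : ℕ∞) f) (c : ℝ) (i : Fin 3) (q : ℝ × V3) :
    pd i (fun r => c * f r) q = c * pd i f q := by
  simp only [pd]
  rw [fderiv_const_mul (slice_diff hf q.1 q.2)]
  simp

lemma dtS_mul {f g : ℝ × V3 → ℝ} (hf : ContDiff ℝ (⊤ : ℕ∞) f) (hg : ContDiff ℝ (⊤ : ℕ∞) g)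
    (q : ℝ × V3) :
    dtS (fun r => f r * g r) q = dtS f q * g q + f q * dtS g q := by
  simp only [dtS]
  rw [deriv_fun_mul ((tslice_diff hf q.2).differentiableAt) ((tslice_diff hg q.2).differentiableAt)]

lemma dtS_add {f g : ℝ × V3 → ℝ} (hf : ContDiff ℝ (⊤ : ℕ∞) f) (hg : ContDiff ℝ (⊤ : ℕ∞) g)
    (q : ℝ × V3) :
    dtS (fun r => f r + g r) q = dtS f q + dtS g q := by
  simp only [dtS]
  rw [deriv_fun_add ((tslice_diff hf q.2).differentiableAt) ((tslice_diff hg q.2).differentiableAt)]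

lemma dtS_sub {f g : ℝ × V3 → ℝ} (hf : ContDiff ℝ (⊤ : ℕ∞) f) (hg : ContDiff ℝ (⊤ : ℕ∞) g)
    (q : ℝ × V3) :
    dtS (fun r => f r - g r) q = dtS f q - dtS g q := by
  simp only [dtS]
  rw [deriv_fun_sub ((tslice_diff hf q.2).differentiableAt) ((tslice_diff hg q.2).differentiableAt)]

lemma fderiv_fderiv_symm {f : ℝ × V3 → ℝ} (hf : ContDiff ℝ (⊤ : ℕ∞) f) (q u w : ℝ × V3) :
    fderiv ℝ (fun r => fderiv ℝ f r u) q w = fderiv ℝ (fun r => fderiv ℝ f r w) q u := by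
  have hd : DifferentiableAt ℝ (fderiv ℝ f) q :=
    ((hf.fderiv_right (m := (⊤ : ℕ∞)) (by simp)).differentiable (by simp)) q
  have h1 : ∀ z : ℝ × V3, fderiv ℝ (fun r => fderiv ℝ f r z) q
      = (fderiv ℝ (fderiv ℝ f) q).flip z := by
    intro z
    rw [fderiv_clm_apply hd (differentiableAt_const z)]
    simp
  rw [h1 u, h1 w]
  have hsym := (hf.contDiffAt (x := q)).isSymmSndFDerivAt (by rw [minSmoothness_of_isRCLikeNormedField]; exact WithTop.coe_le_coe.mpr (le_top : (2 : ℕ∞) ≤ ⊤))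
  exact (hsym w u).symm ▸ rfl

lemma pd_const (c : ℝ) (i : Fin 3) (q : ℝ × V3) :
    pd i (fun _ => c) q = 0 := by
  simp [pd]

lemma pd_pd_comm {f : ℝ × V3 → ℝ} (hf : ContDiff ℝ (⊤ : ℕ∞) f) (i j : Fin 3) (q : ℝ × V3) :
    pd i (fun r => pd j f r) q = pd j (fun r => pd i f r) q := by
  have e : ∀ k : Fin 3, (fun r => pd k f r) = fun r => fderiv ℝ f r (0, e3 k) :=
    fun k => funext (pd_eq hf k)
  rw [e j, e i, pd_eq (rep_contDiff hf _) i, pd_eq (rep_contDiff hf _) j,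
    fderiv_fderiv_symm hf]

lemma dtS_pd_comm {f : ℝ × V3 → ℝ} (hf : ContDiff ℝ (⊤ : ℕ∞) f) (i : Fin 3) (q : ℝ × V3) :
    dtS (fun r => pd i f r) q = pd i (fun r => dtS f r) q := by
  have e1 : (fun r => pd i f r) = fun r => fderiv ℝ f r (0, e3 i) := funext (pd_eq hf i)
  have e2 : (fun r => dtS f r) = fun r => fderiv ℝ f r (1, 0) := funext (dtS_eq hf)
  rw [e1, e2, dtS_eq (rep_contDiff hf _), pd_eq (rep_contDiff hf _) i,
    fderiv_fderiv_symm hf]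


attribute [fun_prop] pd_contDiff dtS_contDiff


/-- For a smooth divergence-free solution `(v, p)` of the incompressible
Euler equations on `ℝ × ℝ³`, the helicity density `h = v·(∇×v)` obeys the Eulerian
conservation law `∂h/∂t + ∇·((p + ½|v|²)(∇×v) + v × (v × (∇×v))) = 0` everywhere. -/
theorem helicity_density_divergence_law
    (v : ℝ × V3 → V3) (p : ℝ × V3 → ℝ)
    (hv : ContDiff ℝ (⊤ : ℕ∞) v) (hp : ContDiff ℝ (⊤ : ℕ∞) p)
    (hdiv : ∀ q, div3 v q = 0)
    (heuler : ∀ q i, dtV v q i + dirD v v q i = - grad3 p q i) :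
    ∀ q, dtS (fun r => v r ⬝ᵥ curl3 v r) q
      + div3 (fun r => (p r + (1/2) * (v r ⬝ᵥ v r)) • curl3 v r
          + crossProduct (v r) (crossProduct (v r) (curl3 v r))) q = 0 := by
  intro q
  have hvC : ∀ i, ContDiff ℝ (⊤ : ℕ∞) (fun r => v r i) := fun i => contDiff_pi.mp hv i
  simp only [div3, dotProduct, curl3, cross_apply, Fin.sum_univ_three, Pi.add_apply,
    Pi.smul_apply, smul_eq_mul, Matrix.cons_val_zero, Matrix.cons_val_one, Matrix.head_cons,
    Matrix.cons_val_two, Matrix.tail_cons]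
  have hEq : ∀ (i : Fin 3) (r : ℝ × V3), dtS (fun r' => v r' i) r
      = -pd i p r - (v r 0 * pd 0 (fun r' => v r' i) r + v r 1 * pd 1 (fun r' => v r' i) r
        + v r 2 * pd 2 (fun r' => v r' i) r) := by
    intro i r
    have := heuler r i
    simp only [dtV, dirD, grad3, Fin.sum_univ_three] at this
    linarith
  simp (disch := fun_prop) only [dtS_add, dtS_sub, dtS_mul, dtS_pd_comm, hEq,
    pd_add, pd_sub, pd_mul, pd_neg, pd_const_mul, pd_const, zero_mul, mul_zero, add_zero, zero_add]
  have hsymv : ∀ (i j k : Fin 3), pd k (pd j (fun r => v r i)) q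
      = pd j (pd k (fun r => v r i)) q := fun i j k => pd_pd_comm (hvC i) k j q
  have hsymp : ∀ (j k : Fin 3), pd k (pd j p) q = pd j (pd k p) q :=
    fun j k => pd_pd_comm hp k j q
  linear_combination
    ((-1:ℝ) * (v q 0) * (v q 2)) * (hsymv 0 1 0)
    + ((v q 0) * (v q 1)) * (hsymv 0 2 0)
    + ((1/2:ℝ) * (v q 2) * (v q 2) + (p q) + (-1/2:ℝ) * (v q 0) * (v q 0) + (1/2:ℝ) * (v q 1) * (v q 1)) * (hsymv 0 2 1)
    + ((-1:ℝ) * (v q 1) * (v q 2)) * (hsymv 1 1 0)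
    + ((-1/2:ℝ) * (v q 2) * (v q 2) + (-1:ℝ) * (p q) + (-1/2:ℝ) * (v q 0) * (v q 0) + (1/2:ℝ) * (v q 1) * (v q 1)) * (hsymv 1 2 0)
    + ((-1:ℝ) * (v q 0) * (v q 1)) * (hsymv 1 2 1)
    + ((1/2:ℝ) * (v q 1) * (v q 1) + (p q) + (1/2:ℝ) * (v q 0) * (v q 0) + (-1/2:ℝ) * (v q 2) * (v q 2)) * (hsymv 2 1 0)
    + ((v q 1) * (v q 2)) * (hsymv 2 2 0)
    + ((-1:ℝ) * (v q 0) * (v q 2)) * (hsymv 2 2 1)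
    + ((-1:ℝ) * (v q 2)) * (hsymp 1 0)
    + ((v q 1)) * (hsymp 2 0)
    + ((-1:ℝ) * (v q 0)) * (hsymp 2 1)
end
end

section
/- Let v : ℝ × ℝ³ → ℝ³ be a smooth time-dependent vector field, let f₁, f₂, f₃ : ℝ × ℝ³ → ℝ be smooth scalars each advected by v (∂f_i/∂t + v·∇f_i = 0), and let ρ : ℝ × ℝ³ → ℝ be a smooth nowhere-vanishing function satisfying the continuity equation ∂ρ/∂t + ∇·(ρv) = 0. Then the generalized potential vorticity ρ⁻¹ ∇f₁·(∇f₂ × ∇f₃) is advected by v: ∂/∂t(ρ⁻¹∇f₁·(∇f₂×∇f₃)) + v·∇(ρ⁻¹∇f₁·(∇f₂×∇f₃)) = 0 everywhere. -/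
noncomputable section

open Matrix MeasureTheory

namespace PVAux

/-- Spatial directional derivative, as a function. -/
def sder (f : ℝ × V3 → ℝ) (i : Fin 3) : ℝ × V3 → ℝ := fun r => fderiv ℝ f r ((0:ℝ), e3 i)

theorem dtS_eq_fderiv {f : ℝ × V3 → ℝ} {q : ℝ × V3} (hf : DifferentiableAt ℝ f q) :
    dtS f q = fderiv ℝ f q ((1:ℝ), (0:V3)) := by
  have h1 : HasDerivAt (fun s : ℝ => ((s, q.2) : ℝ × V3)) ((1:ℝ), (0:V3)) q.1 :=
    (hasDerivAt_id q.1).prodMk (hasDerivAt_const q.1 q.2)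
  have h2 : HasDerivAt (fun s : ℝ => f (s, q.2)) (fderiv ℝ f q ((1:ℝ), (0:V3))) q.1 :=
    (hf.hasFDerivAt).comp_hasDerivAt q.1 h1
  exact h2.deriv

theorem pd_eq_fderiv {f : ℝ × V3 → ℝ} {q : ℝ × V3} (hf : DifferentiableAt ℝ f q) (i : Fin 3) :
    pd i f q = fderiv ℝ f q ((0:ℝ), e3 i) := by
  have h1 : HasFDerivAt (fun y : V3 => ((q.1, y) : ℝ × V3))
      ((0 : V3 →L[ℝ] ℝ).prod (ContinuousLinearMap.id ℝ V3)) q.2 :=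
    (hasFDerivAt_const q.1 q.2).prodMk (hasFDerivAt_id q.2)
  have h2 : HasFDerivAt (fun y : V3 => f (q.1, y))
      ((fderiv ℝ f q).comp ((0 : V3 →L[ℝ] ℝ).prod (ContinuousLinearMap.id ℝ V3))) q.2 :=
    (hf.hasFDerivAt).comp q.2 h1
  have h3 : fderiv ℝ (fun y : V3 => f (q.1, y)) q.2 = _ := h2.fderiv
  show fderiv ℝ (fun y : V3 => f (q.1, y)) q.2 (e3 i) = _
  rw [h3]
  simp

theorem contDiff_dirfderiv {f : ℝ × V3 → ℝ} (hf : ContDiff ℝ (⊤ : ℕ∞) f) (w : ℝ × V3) :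
    ContDiff ℝ (⊤ : ℕ∞) (fun q => fderiv ℝ f q w) :=
  (hf.fderiv_right (by simp)).clm_apply contDiff_const

theorem sder_contDiff {f : ℝ × V3 → ℝ} (hf : ContDiff ℝ (⊤ : ℕ∞) f) (i : Fin 3) :
    ContDiff ℝ (⊤ : ℕ∞) (sder f i) := contDiff_dirfderiv hf _

theorem fd_add {f g : ℝ × V3 → ℝ} {q w : ℝ × V3} (hf : DifferentiableAt ℝ f q)
    (hg : DifferentiableAt ℝ g q) :
    fderiv ℝ (fun r => f r + g r) q w = fderiv ℝ f q w + fderiv ℝ g q w := by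
  rw [fderiv_fun_add hf hg]; simp

theorem fd_mul {f g : ℝ × V3 → ℝ} {q : ℝ × V3} (hf : DifferentiableAt ℝ f q)
    (hg : DifferentiableAt ℝ g q) (w : ℝ × V3) :
    fderiv ℝ (fun r => f r * g r) q w = fderiv ℝ f q w * g q + f q * fderiv ℝ g q w := by
  rw [fderiv_fun_mul hf hg]
  simp only [ContinuousLinearMap.add_apply, ContinuousLinearMap.smul_apply, smul_eq_mul]
  ring

theorem fd_inv {f : ℝ × V3 → ℝ} {q : ℝ × V3} (hf : DifferentiableAt ℝ f q)
    (h0 : f q ≠ 0) (w : ℝ × V3) :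
    fderiv ℝ (fun r => (f r)⁻¹) q w = -((f q ^ 2)⁻¹ * fderiv ℝ f q w) := by
  have h2 : fderiv ℝ (fun r => (f r)⁻¹) q = _ :=
    ((hasFDerivAt_inv' (𝕜 := ℝ) h0).comp q hf.hasFDerivAt).fderiv
  rw [h2]
  simp only [ContinuousLinearMap.coe_comp', Function.comp_apply, ContinuousLinearMap.neg_apply,
    ContinuousLinearMap.mulLeftRight_apply]
  rw [sq, mul_inv]
  ring

theorem fderiv_swap {f : ℝ × V3 → ℝ} (hf : ContDiff ℝ (⊤ : ℕ∞) f) (q w₁ w₂ : ℝ × V3) :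
    fderiv ℝ (fun r => fderiv ℝ f r w₁) q w₂ = fderiv ℝ (fun r => fderiv ℝ f r w₂) q w₁ := by
  have hd : ∀ y, HasFDerivAt f (fderiv ℝ f y) y := fun y =>
    ((hf.differentiable (by simp)) y).hasFDerivAt
  have h2 : DifferentiableAt ℝ (fderiv ℝ f) q :=
    ((hf.fderiv_right (m := (⊤ : ℕ∞)) (by simp)).differentiable (by simp)) q
  have hs := second_derivative_symmetric hd h2.hasFDerivAt w₂ w₁
  have e : ∀ w : ℝ × V3, fderiv ℝ (fun r => fderiv ℝ f r w) q
      = (fderiv ℝ (fderiv ℝ f) q).flip w := by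
    intro w
    rw [fderiv_clm_apply h2 (differentiableAt_const w)]
    simp
  rw [e w₁, e w₂]
  simpa using hs

theorem sder_swap {f : ℝ × V3 → ℝ} (hf : ContDiff ℝ (⊤ : ℕ∞) f) (q : ℝ × V3) (i m : Fin 3) :
    fderiv ℝ (sder f i) q ((0:ℝ), e3 m) = fderiv ℝ (sder f m) q ((0:ℝ), e3 i) :=
  fderiv_swap hf q ((0:ℝ), e3 i) ((0:ℝ), e3 m)

end PVAux

open PVAux

theorem PVAux.sder_time (v : ℝ × V3 → V3) (f : ℝ × V3 → ℝ)
    (hv : ContDiff ℝ (⊤ : ℕ∞) v) (hf : ContDiff ℝ (⊤ : ℕ∞) f)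
    (ha : ∀ r, dtS f r + adv v f r = 0) (q : ℝ × V3) (i : Fin 3) :
    fderiv ℝ (sder f i) q ((1:ℝ), (0:V3)) =
      -(fderiv ℝ (fun r => v r 0) q ((0:ℝ), e3 i) * sder f 0 q
          + v q 0 * fderiv ℝ (sder f 0) q ((0:ℝ), e3 i)
        + fderiv ℝ (fun r => v r 1) q ((0:ℝ), e3 i) * sder f 1 q
          + v q 1 * fderiv ℝ (sder f 1) q ((0:ℝ), e3 i)
        + fderiv ℝ (fun r => v r 2) q ((0:ℝ), e3 i) * sder f 2 q
          + v q 2 * fderiv ℝ (sder f 2) q ((0:ℝ), e3 i)) := by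
  have hfd : ∀ r, DifferentiableAt ℝ f r := fun r => (hf.differentiable (by simp)) r
  have hv' : ∀ j : Fin 3, ContDiff ℝ (⊤ : ℕ∞) (fun r => v r j) := fun j => contDiff_pi.mp hv j
  have hswap : fderiv ℝ (sder f i) q ((1:ℝ), (0:V3))
      = fderiv ℝ (fun r => fderiv ℝ f r ((1:ℝ), (0:V3))) q ((0:ℝ), e3 i) :=
    fderiv_swap hf q ((0:ℝ), e3 i) ((1:ℝ), (0:V3))
  have hTf : (fun r => fderiv ℝ f r ((1:ℝ), (0:V3)))
      = (fun r => -(v r 0 * sder f 0 r + v r 1 * sder f 1 r + v r 2 * sder f 2 r)) := by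
    funext r
    have h := ha r
    rw [dtS_eq_fderiv (hfd r)] at h
    simp only [adv, Fin.sum_univ_three] at h
    rw [pd_eq_fderiv (hfd r) 0, pd_eq_fderiv (hfd r) 1, pd_eq_fderiv (hfd r) 2] at h
    simp only [sder]
    linarith
  rw [hswap, hTf]
  have Hv : ∀ j : Fin 3, HasFDerivAt (fun r => v r j) (fderiv ℝ (fun r => v r j) q) q :=
    fun j => (((hv' j).differentiable (by simp)) q).hasFDerivAt
  have Hs : ∀ k : Fin 3, HasFDerivAt (sder f k) (fderiv ℝ (sder f k) q) q :=
    fun k => (((sder_contDiff hf k).differentiable (by simp)) q).hasFDerivAt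
  have H := ((((Hv 0).mul (Hs 0)).add ((Hv 1).mul (Hs 1))).add ((Hv 2).mul (Hs 2))).neg
  have h2 : fderiv ℝ
      (fun r => -(v r 0 * sder f 0 r + v r 1 * sder f 1 r + v r 2 * sder f 2 r)) q = _ :=
    H.fderiv
  rw [h2]
  simp only [ContinuousLinearMap.neg_apply, ContinuousLinearMap.add_apply,
    ContinuousLinearMap.smul_apply, smul_eq_mul]
  ring

set_option maxHeartbeats 1000000 in
theorem PVAux.fd_q (f₁ f₂ f₃ : ℝ × V3 → ℝ) (hf₁ : ContDiff ℝ (⊤ : ℕ∞) f₁) (hf₂ : ContDiff ℝ (⊤ : ℕ∞) f₂)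
    (hf₃ : ContDiff ℝ (⊤ : ℕ∞) f₃) (q w : ℝ × V3) :
    fderiv ℝ (fun r => sder f₁ 0 r * (sder f₂ 1 r * sder f₃ 2 r - sder f₂ 2 r * sder f₃ 1 r) + sder f₁ 1 r * (sder f₂ 2 r * sder f₃ 0 r - sder f₂ 0 r * sder f₃ 2 r) + sder f₁ 2 r * (sder f₂ 0 r * sder f₃ 1 r - sder f₂ 1 r * sder f₃ 0 r)) q w
    = (fderiv ℝ (sder f₁ 0) q w * sder f₂ 1 q * sder f₃ 2 q + sder f₁ 0 q * fderiv ℝ (sder f₂ 1) q w * sder f₃ 2 q + sder f₁ 0 q * sder f₂ 1 q * fderiv ℝ (sder f₃ 2) q w) + (fderiv ℝ (sder f₁ 1) q w * sder f₂ 2 q * sder f₃ 0 q + sder f₁ 1 q * fderiv ℝ (sder f₂ 2) q w * sder f₃ 0 q + sder f₁ 1 q * sder f₂ 2 q * fderiv ℝ (sder f₃ 0) q w) + (fderiv ℝ (sder f₁ 2) q w * sder f₂ 0 q * sder f₃ 1 q + sder f₁ 2 q * fderiv ℝ (sder f₂ 0) q w * sder f₃ 1 q + sder f₁ 2 q * sder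 f₂ 0 q * fderiv ℝ (sder f₃ 1) q w) - (fderiv ℝ (sder f₁ 0) q w * sder f₂ 2 q * sder f₃ 1 q + sder f₁ 0 q * fderiv ℝ (sder f₂ 2) q w * sder f₃ 1 q + sder f₁ 0 q * sder f₂ 2 q * fderiv ℝ (sder f₃ 1) q w) - (fderiv ℝ (sder f₁ 2) q w * sder f₂ 1 q * sder f₃ 0 q + sder f₁ 2 q * fderiv ℝ (sder f₂ 1) q w * sder f₃ 0 q + sder f₁ 2 q * sder f₂ 1 q * fderiv ℝ (sder f₃ 0) q w) - (fderiv ℝ (sder f₁ 1) q w * sder f₂ 0 q * sder f₃ 2 q + sder f₁ 1 q * fderiv ℝ (sder f₂ 0) q w * sder f₃ 2 q + sder f₁ 1 q * sder f₂ 0 q * fderiv ℝ (sder f₃ 2) q w) := by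
  have Hs : ∀ (f : ℝ × V3 → ℝ), ContDiff ℝ (⊤ : ℕ∞) f → ∀ k : Fin 3,
      HasFDerivAt (sder f k) (fderiv ℝ (sder f k) q) q :=
    fun f hf k => (((sder_contDiff hf k).differentiable (by simp)) q).hasFDerivAt
  have H := (((Hs f₁ hf₁ 0).mul (((Hs f₂ hf₂ 1).mul (Hs f₃ hf₃ 2)).sub
                ((Hs f₂ hf₂ 2).mul (Hs f₃ hf₃ 1)))).add
             ((Hs f₁ hf₁ 1).mul (((Hs f₂ hf₂ 2).mul (Hs f₃ hf₃ 0)).sub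
                ((Hs f₂ hf₂ 0).mul (Hs f₃ hf₃ 2))))).add
             ((Hs f₁ hf₁ 2).mul (((Hs f₂ hf₂ 0).mul (Hs f₃ hf₃ 1)).sub
                ((Hs f₂ hf₂ 1).mul (Hs f₃ hf₃ 0))))
  have h2 : fderiv ℝ (fun r => sder f₁ 0 r * (sder f₂ 1 r * sder f₃ 2 r - sder f₂ 2 r * sder f₃ 1 r) + sder f₁ 1 r * (sder f₂ 2 r * sder f₃ 0 r - sder f₂ 0 r * sder f₃ 2 r) + sder f₁ 2 r * (sder f₂ 0 r * sder f₃ 1 r - sder f₂ 1 r * sder f₃ 0 r)) q = _ := H.fderiv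
  rw [h2]
  simp only [ContinuousLinearMap.add_apply, ContinuousLinearMap.sub_apply,
    ContinuousLinearMap.smul_apply, smul_eq_mul, Pi.mul_apply, Pi.sub_apply]
  ring

set_option maxHeartbeats 4000000 in
/-- If `f₁, f₂, f₃` are smooth scalars advected by a smooth `v` and `ρ` is
a smooth nowhere-vanishing solution of the continuity equation `∂ρ/∂t + ∇·(ρv) = 0`, then
the generalized potential vorticity `ρ⁻¹ ∇f₁·(∇f₂ × ∇f₃)` is advected by `v`. -/
theorem potential_vorticity_advected
    (v : ℝ × V3 → V3) (f₁ f₂ f₃ ρ : ℝ × V3 → ℝ)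
    (hv : ContDiff ℝ (⊤ : ℕ∞) v)
    (hf₁ : ContDiff ℝ (⊤ : ℕ∞) f₁) (hf₂ : ContDiff ℝ (⊤ : ℕ∞) f₂) (hf₃ : ContDiff ℝ (⊤ : ℕ∞) f₃)
    (hρ : ContDiff ℝ (⊤ : ℕ∞) ρ) (hρ0 : ∀ q, ρ q ≠ 0)
    (ha₁ : ∀ q, dtS f₁ q + adv v f₁ q = 0)
    (ha₂ : ∀ q, dtS f₂ q + adv v f₂ q = 0)
    (ha₃ : ∀ q, dtS f₃ q + adv v f₃ q = 0)
    (hcont : ∀ q, dtS ρ q + div3 (fun r => ρ r • v r) q = 0) :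
    ∀ q, dtS (fun r => (ρ r)⁻¹ * (grad3 f₁ r ⬝ᵥ crossProduct (grad3 f₂ r) (grad3 f₃ r))) q
      + adv v (fun r => (ρ r)⁻¹ * (grad3 f₁ r ⬝ᵥ crossProduct (grad3 f₂ r) (grad3 f₃ r))) q
      = 0 := by
  intro q
  have hv' : ∀ j : Fin 3, ContDiff ℝ (⊤ : ℕ∞) (fun r => v r j) := fun j => contDiff_pi.mp hv j
  have hpd₁ : ∀ i : Fin 3, pd i f₁ = sder f₁ i := fun i =>
    funext fun r => pd_eq_fderiv ((hf₁.differentiable (by simp)) r) i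
  have hpd₂ : ∀ i : Fin 3, pd i f₂ = sder f₂ i := fun i =>
    funext fun r => pd_eq_fderiv ((hf₂.differentiable (by simp)) r) i
  have hpd₃ : ∀ i : Fin 3, pd i f₃ = sder f₃ i := fun i =>
    funext fun r => pd_eq_fderiv ((hf₃.differentiable (by simp)) r) i
  have hQc : ContDiff ℝ (⊤ : ℕ∞) (fun r => sder f₁ 0 r * (sder f₂ 1 r * sder f₃ 2 r - sder f₂ 2 r * sder f₃ 1 r) + sder f₁ 1 r * (sder f₂ 2 r * sder f₃ 0 r - sder f₂ 0 r * sder f₃ 2 r) + sder f₁ 2 r * (sder f₂ 0 r * sder f₃ 1 r - sder f₂ 1 r * sder f₃ 0 r)) := by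
    have hs : ∀ (f : ℝ × V3 → ℝ), ContDiff ℝ (⊤ : ℕ∞) f → ∀ i : Fin 3, ContDiff ℝ (⊤ : ℕ∞) (sder f i) :=
      fun f hf i => sder_contDiff hf i
    exact (((hs f₁ hf₁ 0).mul (((hs f₂ hf₂ 1).mul (hs f₃ hf₃ 2)).sub
              ((hs f₂ hf₂ 2).mul (hs f₃ hf₃ 1)))).add
           ((hs f₁ hf₁ 1).mul (((hs f₂ hf₂ 2).mul (hs f₃ hf₃ 0)).sub
              ((hs f₂ hf₂ 0).mul (hs f₃ hf₃ 2))))).add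
           ((hs f₁ hf₁ 2).mul (((hs f₂ hf₂ 0).mul (hs f₃ hf₃ 1)).sub
              ((hs f₂ hf₂ 1).mul (hs f₃ hf₃ 0))))
  have hPfun : (fun r => (ρ r)⁻¹ * (grad3 f₁ r ⬝ᵥ crossProduct (grad3 f₂ r) (grad3 f₃ r)))
      = fun r => (ρ r)⁻¹ * (sder f₁ 0 r * (sder f₂ 1 r * sder f₃ 2 r - sder f₂ 2 r * sder f₃ 1 r) + sder f₁ 1 r * (sder f₂ 2 r * sder f₃ 0 r - sder f₂ 0 r * sder f₃ 2 r) + sder f₁ 2 r * (sder f₂ 0 r * sder f₃ 1 r - sder f₂ 1 r * sder f₃ 0 r)) := by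
    funext r
    simp only [grad3, cross_apply, dotProduct, Fin.sum_univ_three, Matrix.cons_val_zero,
      Matrix.cons_val_one, Matrix.head_cons, Matrix.cons_val_two, Matrix.tail_cons,
      hpd₁ 0, hpd₁ 1, hpd₁ 2, hpd₂ 0, hpd₂ 1, hpd₂ 2, hpd₃ 0, hpd₃ 1, hpd₃ 2]
  have hPc : ContDiff ℝ (⊤ : ℕ∞) (fun r => (ρ r)⁻¹ * (sder f₁ 0 r * (sder f₂ 1 r * sder f₃ 2 r - sder f₂ 2 r * sder f₃ 1 r) + sder f₁ 1 r * (sder f₂ 2 r * sder f₃ 0 r - sder f₂ 0 r * sder f₃ 2 r) + sder f₁ 2 r * (sder f₂ 0 r * sder f₃ 1 r - sder f₂ 1 r * sder f₃ 0 r))) :=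
    (hρ.inv hρ0).mul hQc
  have hPq : DifferentiableAt ℝ (fun r => (ρ r)⁻¹ * (sder f₁ 0 r * (sder f₂ 1 r * sder f₃ 2 r - sder f₂ 2 r * sder f₃ 1 r) + sder f₁ 1 r * (sder f₂ 2 r * sder f₃ 0 r - sder f₂ 0 r * sder f₃ 2 r) + sder f₁ 2 r * (sder f₂ 0 r * sder f₃ 1 r - sder f₂ 1 r * sder f₃ 0 r))) q :=
    (hPc.differentiable (by simp)) q
  -- derivative of the full quantity in any direction
  have hPd : ∀ w : ℝ × V3, fderiv ℝ (fun r => (ρ r)⁻¹ * (sder f₁ 0 r * (sder f₂ 1 r * sder f₃ 2 r - sder f₂ 2 r * sder f₃ 1 r) + sder f₁ 1 r * (sder f₂ 2 r * sder f₃ 0 r - sder f₂ 0 r * sder f₃ 2 r) + sder f₁ 2 r * (sder f₂ 0 r * sder f₃ 1 r - sder f₂ 1 r * sder f₃ 0 r))) q w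
      = -((ρ q ^ 2)⁻¹ * fderiv ℝ ρ q w) * (sder f₁ 0 q * (sder f₂ 1 q * sder f₃ 2 q - sder f₂ 2 q * sder f₃ 1 q) + sder f₁ 1 q * (sder f₂ 2 q * sder f₃ 0 q - sder f₂ 0 q * sder f₃ 2 q) + sder f₁ 2 q * (sder f₂ 0 q * sder f₃ 1 q - sder f₂ 1 q * sder f₃ 0 q))
        + (ρ q)⁻¹ * fderiv ℝ (fun r => sder f₁ 0 r * (sder f₂ 1 r * sder f₃ 2 r - sder f₂ 2 r * sder f₃ 1 r) + sder f₁ 1 r * (sder f₂ 2 r * sder f₃ 0 r - sder f₂ 0 r * sder f₃ 2 r) + sder f₁ 2 r * (sder f₂ 0 r * sder f₃ 1 r - sder f₂ 1 r * sder f₃ 0 r)) q w := by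
    intro w
    rw [fd_mul (f := fun r => (ρ r)⁻¹) (((hρ.inv hρ0).differentiable (by simp)) q) ((hQc.differentiable (by simp)) q) w]
    rw [fd_inv ((hρ.differentiable (by simp)) q) (hρ0 q) w]
  -- continuity equation, solved for the time derivative of ρ
  have htρ : fderiv ℝ ρ q ((1:ℝ), (0:V3))
      = -(fderiv ℝ ρ q ((0:ℝ), e3 0) * v q 0 + fderiv ℝ ρ q ((0:ℝ), e3 1) * v q 1
          + fderiv ℝ ρ q ((0:ℝ), e3 2) * v q 2
          + ρ q * (fderiv ℝ (fun r => v r 0) q ((0:ℝ), e3 0) + fderiv ℝ (fun r => v r 1) q ((0:ℝ), e3 1) + fderiv ℝ (fun r => v r 2) q ((0:ℝ), e3 2))) := by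
    have h := hcont q
    rw [dtS_eq_fderiv ((hρ.differentiable (by simp)) q)] at h
    simp only [div3, Fin.sum_univ_three, Pi.smul_apply, smul_eq_mul] at h
    have hm : ∀ j : Fin 3, DifferentiableAt ℝ (fun r => ρ r * v r j) q :=
      fun j => (((hρ.mul (hv' j)).differentiable (by simp)) q)
    rw [pd_eq_fderiv (hm 0) 0, pd_eq_fderiv (hm 1) 1, pd_eq_fderiv (hm 2) 2] at h
    rw [fd_mul ((hρ.differentiable (by simp)) q) (((hv' 0).differentiable (by simp)) q),
        fd_mul ((hρ.differentiable (by simp)) q) (((hv' 1).differentiable (by simp)) q),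
        fd_mul ((hρ.differentiable (by simp)) q) (((hv' 2).differentiable (by simp)) q)] at h
    linarith
  have hTS₁ : ∀ i : Fin 3, fderiv ℝ (sder f₁ i) q ((1:ℝ), (0:V3)) = -(fderiv ℝ (fun r => v r 0) q ((0:ℝ), e3 i) * sder f₁ 0 q + v q 0 * fderiv ℝ (sder f₁ 0) q ((0:ℝ), e3 i) + fderiv ℝ (fun r => v r 1) q ((0:ℝ), e3 i) * sder f₁ 1 q + v q 1 * fderiv ℝ (sder f₁ 1) q ((0:ℝ), e3 i) + fderiv ℝ (fun r => v r 2) q ((0:ℝ), e3 i) * sder f₁ 2 q + v q 2 * fderiv ℝ (sder f₁ 2) q ((0:ℝ), e3 i)) :=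
    fun i => sder_time v f₁ hv hf₁ ha₁ q i
  have hTS₂ : ∀ i : Fin 3, fderiv ℝ (sder f₂ i) q ((1:ℝ), (0:V3)) = -(fderiv ℝ (fun r => v r 0) q ((0:ℝ), e3 i) * sder f₂ 0 q + v q 0 * fderiv ℝ (sder f₂ 0) q ((0:ℝ), e3 i) + fderiv ℝ (fun r => v r 1) q ((0:ℝ), e3 i) * sder f₂ 1 q + v q 1 * fderiv ℝ (sder f₂ 1) q ((0:ℝ), e3 i) + fderiv ℝ (fun r => v r 2) q ((0:ℝ), e3 i) * sder f₂ 2 q + v q 2 * fderiv ℝ (sder f₂ 2) q ((0:ℝ), e3 i)) :=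
    fun i => sder_time v f₂ hv hf₂ ha₂ q i
  have hTS₃ : ∀ i : Fin 3, fderiv ℝ (sder f₃ i) q ((1:ℝ), (0:V3)) = -(fderiv ℝ (fun r => v r 0) q ((0:ℝ), e3 i) * sder f₃ 0 q + v q 0 * fderiv ℝ (sder f₃ 0) q ((0:ℝ), e3 i) + fderiv ℝ (fun r => v r 1) q ((0:ℝ), e3 i) * sder f₃ 1 q + v q 1 * fderiv ℝ (sder f₃ 1) q ((0:ℝ), e3 i) + fderiv ℝ (fun r => v r 2) q ((0:ℝ), e3 i) * sder f₃ 2 q + v q 2 * fderiv ℝ (sder f₃ 2) q ((0:ℝ), e3 i)) :=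
    fun i => sder_time v f₃ hv hf₃ ha₃ q i
  have hQd : ∀ w : ℝ × V3, fderiv ℝ (fun r => sder f₁ 0 r * (sder f₂ 1 r * sder f₃ 2 r - sder f₂ 2 r * sder f₃ 1 r) + sder f₁ 1 r * (sder f₂ 2 r * sder f₃ 0 r - sder f₂ 0 r * sder f₃ 2 r) + sder f₁ 2 r * (sder f₂ 0 r * sder f₃ 1 r - sder f₂ 1 r * sder f₃ 0 r)) q w
      = (fderiv ℝ (sder f₁ 0) q w * sder f₂ 1 q * sder f₃ 2 q + sder f₁ 0 q * fderiv ℝ (sder f₂ 1) q w * sder f₃ 2 q + sder f₁ 0 q * sder f₂ 1 q * fderiv ℝ (sder f₃ 2) q w) + (fderiv ℝ (sder f₁ 1) q w * sder f₂ 2 q * sder f₃ 0 q + sder f₁ 1 q * fderiv ℝ (sder f₂ 2) q w * sder f₃ 0 q + sder f₁ 1 q * sder f₂ 2 q * fderiv ℝ (sder f₃ 0) q w) + (fderiv ℝ (sder f₁ 2) q w * sder f₂ 0 q * sder f₃ 1 q + sder f₁ 2 q * fderiv ℝ (sder f₂ 0) q w * sder f₃ 1 q + sder f₁ 2 q * sder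 f₂ 0 q * fderiv ℝ (sder f₃ 1) q w) - (fderiv ℝ (sder f₁ 0) q w * sder f₂ 2 q * sder f₃ 1 q + sder f₁ 0 q * fderiv ℝ (sder f₂ 2) q w * sder f₃ 1 q + sder f₁ 0 q * sder f₂ 2 q * fderiv ℝ (sder f₃ 1) q w) - (fderiv ℝ (sder f₁ 2) q w * sder f₂ 1 q * sder f₃ 0 q + sder f₁ 2 q * fderiv ℝ (sder f₂ 1) q w * sder f₃ 0 q + sder f₁ 2 q * sder f₂ 1 q * fderiv ℝ (sder f₃ 0) q w) - (fderiv ℝ (sder f₁ 1) q w * sder f₂ 0 q * sder f₃ 2 q + sder f₁ 1 q * fderiv ℝ (sder f₂ 0) q w * sder f₃ 2 q + sder f₁ 1 q * sder f₂ 0 q * fderiv ℝ (sder f₃ 2) q w) := fun w => fd_q f₁ f₂ f₃ hf₁ hf₂ hf₃ q w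
  have hsw110 : fderiv ℝ (sder f₁ 1) q ((0:ℝ), e3 0) = fderiv ℝ (sder f₁ 0) q ((0:ℝ), e3 1) := sder_swap hf₁ q 1 0
  have hsw120 : fderiv ℝ (sder f₁ 2) q ((0:ℝ), e3 0) = fderiv ℝ (sder f₁ 0) q ((0:ℝ), e3 2) := sder_swap hf₁ q 2 0
  have hsw121 : fderiv ℝ (sder f₁ 2) q ((0:ℝ), e3 1) = fderiv ℝ (sder f₁ 1) q ((0:ℝ), e3 2) := sder_swap hf₁ q 2 1
  have hsw210 : fderiv ℝ (sder f₂ 1) q ((0:ℝ), e3 0) = fderiv ℝ (sder f₂ 0) q ((0:ℝ), e3 1) := sder_swap hf₂ q 1 0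
  have hsw220 : fderiv ℝ (sder f₂ 2) q ((0:ℝ), e3 0) = fderiv ℝ (sder f₂ 0) q ((0:ℝ), e3 2) := sder_swap hf₂ q 2 0
  have hsw221 : fderiv ℝ (sder f₂ 2) q ((0:ℝ), e3 1) = fderiv ℝ (sder f₂ 1) q ((0:ℝ), e3 2) := sder_swap hf₂ q 2 1
  have hsw310 : fderiv ℝ (sder f₃ 1) q ((0:ℝ), e3 0) = fderiv ℝ (sder f₃ 0) q ((0:ℝ), e3 1) := sder_swap hf₃ q 1 0
  have hsw320 : fderiv ℝ (sder f₃ 2) q ((0:ℝ), e3 0) = fderiv ℝ (sder f₃ 0) q ((0:ℝ), e3 2) := sder_swap hf₃ q 2 0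
  have hsw321 : fderiv ℝ (sder f₃ 2) q ((0:ℝ), e3 1) = fderiv ℝ (sder f₃ 1) q ((0:ℝ), e3 2) := sder_swap hf₃ q 2 1
  rw [hPfun]
  rw [dtS_eq_fderiv hPq]
  simp only [adv, Fin.sum_univ_three]
  rw [pd_eq_fderiv hPq 0, pd_eq_fderiv hPq 1, pd_eq_fderiv hPq 2]
  simp only [hPd, hQd, hTS₁, hTS₂, hTS₃]
  simp only [hsw110, hsw120, hsw121, hsw210, hsw220, hsw221, hsw310, hsw320, hsw321]
  rw [htρ]
  have hinv : ρ q * (ρ q)⁻¹ = 1 := mul_inv_cancel₀ (hρ0 q)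
  field_simp [hρ0 q]
  ring
end
end

section
/- Let λ, φ : ℝ³ → ℝ be smooth functions and define, for smooth f, g : ℝ³ → ℝ, the bracket {f,g} := λ ∇φ·(∇f × ∇g). Then this bracket is bilinear, antisymmetric, and satisfies the Jacobi identity {f,{g,h}} + {h,{f,g}} + {g,{h,f}} = 0 for all smooth f, g, h : ℝ³ → ℝ; that is, it is a Poisson bracket of Nambu type on C^∞(ℝ³) with Casimir φ and conformal factor λ. -/
noncomputable section

open Matrix

/-- Gradient `∇f` of a scalar field on `ℝ³`. -/
def gradS (f : V3 → ℝ) (x : V3) : V3 := fun i => fderiv ℝ f x (e3 i)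

/-- The Nambu–Poisson bracket `{f,g} = λ ∇φ·(∇f × ∇g)` on `C^∞(ℝ³)` determined by the
Casimir `φ` and the conformal factor `λ`. -/
def nb (lam φ f g : V3 → ℝ) (x : V3) : ℝ :=
  lam x * (gradS φ x ⬝ᵥ crossProduct (gradS f x) (gradS g x))

/-- Partial derivative in direction `e3 i`. -/
def D (i : Fin 3) (f : V3 → ℝ) : V3 → ℝ := fun x => fderiv ℝ f x (e3 i)

lemma contDiff_D {f : V3 → ℝ} (hf : ContDiff ℝ (⊤ : ℕ∞) f) (i : Fin 3) : ContDiff ℝ (⊤ : ℕ∞) (D i f) := by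
  have h1 : ContDiff ℝ (⊤ : ℕ∞) (fun x => fderiv ℝ f x) := hf.fderiv_right (by simp)
  exact (ContinuousLinearMap.apply ℝ ℝ (e3 i)).contDiff.comp h1

lemma nb_eq (lam φ f g : V3 → ℝ) (x : V3) :
    nb lam φ f g x = lam x * (D 0 φ x * (D 1 f x * D 2 g x - D 2 f x * D 1 g x)
      + D 1 φ x * (D 2 f x * D 0 g x - D 0 f x * D 2 g x)
      + D 2 φ x * (D 0 f x * D 1 g x - D 1 f x * D 0 g x)) := by
  simp [nb, gradS, D, cross_apply, dotProduct, Fin.sum_univ_three]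

lemma nb_funext (lam φ f g : V3 → ℝ) :
    nb lam φ f g = lam * (D 0 φ * (D 1 f * D 2 g - D 2 f * D 1 g)
      + D 1 φ * (D 2 f * D 0 g - D 0 f * D 2 g)
      + D 2 φ * (D 0 f * D 1 g - D 1 f * D 0 g)) := by
  funext x
  simpa using nb_eq lam φ f g x

lemma D_add (i : Fin 3) {f g : V3 → ℝ} {x : V3} (hf : DifferentiableAt ℝ f x)
    (hg : DifferentiableAt ℝ g x) : D i (f + g) x = D i f x + D i g x := by
  simp [D, fderiv_add hf hg]

lemma D_sub (i : Fin 3) {f g : V3 → ℝ} {x : V3} (hf : DifferentiableAt ℝ f x)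
    (hg : DifferentiableAt ℝ g x) : D i (f - g) x = D i f x - D i g x := by
  simp [D, fderiv_sub hf hg]

lemma D_mul (i : Fin 3) {f g : V3 → ℝ} {x : V3} (hf : DifferentiableAt ℝ f x)
    (hg : DifferentiableAt ℝ g x) : D i (f * g) x = D i f x * g x + f x * D i g x := by
  have h : (f * g) = fun y => f y * g y := rfl
  simp [D, h, fderiv_fun_mul hf hg]
  ring

lemma D_smul (i : Fin 3) (c : ℝ) {f : V3 → ℝ} {x : V3} (hf : DifferentiableAt ℝ f x) :
    D i (c • f) x = c * D i f x := by
  simp [D, fderiv_const_smul hf c]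

lemma D_D {f : V3 → ℝ} (hf : ContDiff ℝ (⊤ : ℕ∞) f) (i j : Fin 3) (x : V3) :
    D i (D j f) x = fderiv ℝ (fderiv ℝ f) x (e3 i) (e3 j) := by
  have h1 : DifferentiableAt ℝ (fun y => fderiv ℝ f y) x :=
    ((hf.fderiv_right (m := (⊤ : ℕ∞)) (by simp)).differentiable (by simp)) x
  have h : D j f = fun y => (fderiv ℝ f y) (e3 j) := rfl
  rw [D, h, fderiv_clm_apply h1 (differentiableAt_const _)]
  simp

lemma D_symm {f : V3 → ℝ} (hf : ContDiff ℝ (⊤ : ℕ∞) f) (i j : Fin 3) (x : V3) :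
    D i (D j f) x = D j (D i f) x := by
  rw [D_D hf, D_D hf]
  exact (hf.contDiffAt.isSymmSndFDerivAt (by simp only [minSmoothness_of_isRCLikeNormedField]; exact WithTop.coe_le_coe.mpr le_top)) _ _

lemma D_nb (lam φ g h : V3 → ℝ) (hlam : ContDiff ℝ (⊤ : ℕ∞) lam) (hφ : ContDiff ℝ (⊤ : ℕ∞) φ)
    (hg : ContDiff ℝ (⊤ : ℕ∞) g) (hh : ContDiff ℝ (⊤ : ℕ∞) h) (k : Fin 3) (x : V3) :
    D k (nb lam φ g h) x =
      D k lam x * (D 0 φ x * (D 1 g x * D 2 h x - D 2 g x * D 1 h x)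
        + D 1 φ x * (D 2 g x * D 0 h x - D 0 g x * D 2 h x)
        + D 2 φ x * (D 0 g x * D 1 h x - D 1 g x * D 0 h x))
      + lam x * (
          D k (D 0 φ) x * (D 1 g x * D 2 h x - D 2 g x * D 1 h x)
        + D 0 φ x * ((D k (D 1 g) x * D 2 h x + D 1 g x * D k (D 2 h) x)
                     - (D k (D 2 g) x * D 1 h x + D 2 g x * D k (D 1 h) x))
        + D k (D 1 φ) x * (D 2 g x * D 0 h x - D 0 g x * D 2 h x)
        + D 1 φ x * ((D k (D 2 g) x * D 0 h x + D 2 g x * D k (D 0 h) x)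
                     - (D k (D 0 g) x * D 2 h x + D 0 g x * D k (D 2 h) x))
        + D k (D 2 φ) x * (D 0 g x * D 1 h x - D 1 g x * D 0 h x)
        + D 2 φ x * ((D k (D 0 g) x * D 1 h x + D 0 g x * D k (D 1 h) x)
                     - (D k (D 1 g) x * D 0 h x + D 1 g x * D k (D 0 h) x))) := by
  have p0 : DifferentiableAt ℝ (D 0 φ) x := ((contDiff_D hφ 0).differentiable (by simp)) x
  have p1 : DifferentiableAt ℝ (D 1 φ) x := ((contDiff_D hφ 1).differentiable (by simp)) x
  have p2 : DifferentiableAt ℝ (D 2 φ) x := ((contDiff_D hφ 2).differentiable (by simp)) x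
  have g0 : DifferentiableAt ℝ (D 0 g) x := ((contDiff_D hg 0).differentiable (by simp)) x
  have g1 : DifferentiableAt ℝ (D 1 g) x := ((contDiff_D hg 1).differentiable (by simp)) x
  have g2 : DifferentiableAt ℝ (D 2 g) x := ((contDiff_D hg 2).differentiable (by simp)) x
  have q0 : DifferentiableAt ℝ (D 0 h) x := ((contDiff_D hh 0).differentiable (by simp)) x
  have q1 : DifferentiableAt ℝ (D 1 h) x := ((contDiff_D hh 1).differentiable (by simp)) x
  have q2 : DifferentiableAt ℝ (D 2 h) x := ((contDiff_D hh 2).differentiable (by simp)) x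
  have hl : DifferentiableAt ℝ lam x := (hlam.differentiable (by simp)) x
  have m1 : DifferentiableAt ℝ (D 1 g * D 2 h) x := g1.mul q2
  have m2 : DifferentiableAt ℝ (D 2 g * D 1 h) x := g2.mul q1
  have m3 : DifferentiableAt ℝ (D 2 g * D 0 h) x := g2.mul q0
  have m4 : DifferentiableAt ℝ (D 0 g * D 2 h) x := g0.mul q2
  have m5 : DifferentiableAt ℝ (D 0 g * D 1 h) x := g0.mul q1
  have m6 : DifferentiableAt ℝ (D 1 g * D 0 h) x := g1.mul q0
  have s1 : DifferentiableAt ℝ (D 1 g * D 2 h - D 2 g * D 1 h) x := m1.sub m2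
  have s2 : DifferentiableAt ℝ (D 2 g * D 0 h - D 0 g * D 2 h) x := m3.sub m4
  have s3 : DifferentiableAt ℝ (D 0 g * D 1 h - D 1 g * D 0 h) x := m5.sub m6
  have a1 : DifferentiableAt ℝ (D 0 φ * (D 1 g * D 2 h - D 2 g * D 1 h)) x := p0.mul s1
  have a2 : DifferentiableAt ℝ (D 1 φ * (D 2 g * D 0 h - D 0 g * D 2 h)) x := p1.mul s2
  have a3 : DifferentiableAt ℝ (D 2 φ * (D 0 g * D 1 h - D 1 g * D 0 h)) x := p2.mul s3
  have b1 : DifferentiableAt ℝ (D 0 φ * (D 1 g * D 2 h - D 2 g * D 1 h)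
      + D 1 φ * (D 2 g * D 0 h - D 0 g * D 2 h)) x := a1.add a2
  have b2 : DifferentiableAt ℝ (D 0 φ * (D 1 g * D 2 h - D 2 g * D 1 h)
      + D 1 φ * (D 2 g * D 0 h - D 0 g * D 2 h)
      + D 2 φ * (D 0 g * D 1 h - D 1 g * D 0 h)) x := b1.add a3
  rw [nb_funext]
  simp (disch := assumption) only [D_mul, D_add, D_sub, Pi.mul_apply, Pi.add_apply, Pi.sub_apply]
  ring

/-- For smooth `λ, φ : ℝ³ → ℝ`, the bracket `{f,g} = λ ∇φ·(∇f × ∇g)` is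
bilinear (additive and homogeneous in each argument), antisymmetric, and satisfies the
Jacobi identity on smooth functions: it is a Poisson bracket of Nambu type with Casimir
`φ` and conformal factor `λ`. -/
theorem nambu_bracket_is_poisson
    (lam φ : V3 → ℝ) (hlam : ContDiff ℝ (⊤ : ℕ∞) lam) (hφ : ContDiff ℝ (⊤ : ℕ∞) φ) :
    (∀ f f' g : V3 → ℝ, ContDiff ℝ (⊤ : ℕ∞) f → ContDiff ℝ (⊤ : ℕ∞) f' → ContDiff ℝ (⊤ : ℕ∞) g →
      ∀ x, nb lam φ (f + f') g x = nb lam φ f g x + nb lam φ f' g x) ∧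
    (∀ (c : ℝ) (f g : V3 → ℝ), ContDiff ℝ (⊤ : ℕ∞) f → ContDiff ℝ (⊤ : ℕ∞) g →
      ∀ x, nb lam φ (c • f) g x = c * nb lam φ f g x) ∧
    (∀ f g g' : V3 → ℝ, ContDiff ℝ (⊤ : ℕ∞) f → ContDiff ℝ (⊤ : ℕ∞) g → ContDiff ℝ (⊤ : ℕ∞) g' →
      ∀ x, nb lam φ f (g + g') x = nb lam φ f g x + nb lam φ f g' x) ∧
    (∀ (c : ℝ) (f g : V3 → ℝ), ContDiff ℝ (⊤ : ℕ∞) f → ContDiff ℝ (⊤ : ℕ∞) g →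
      ∀ x, nb lam φ f (c • g) x = c * nb lam φ f g x) ∧
    (∀ f g : V3 → ℝ, ∀ x, nb lam φ f g x = - nb lam φ g f x) ∧
    (∀ f g h : V3 → ℝ, ContDiff ℝ (⊤ : ℕ∞) f → ContDiff ℝ (⊤ : ℕ∞) g → ContDiff ℝ (⊤ : ℕ∞) h →
      ∀ x, nb lam φ f (nb lam φ g h) x + nb lam φ h (nb lam φ f g) x
         + nb lam φ g (nb lam φ h f) x = 0) := by
  refine ⟨?_, ?_, ?_, ?_, ?_, ?_⟩
  · intro f f' g hf hf' hg x
    have h1 : DifferentiableAt ℝ f x := (hf.differentiable (by simp)) x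
    have h2 : DifferentiableAt ℝ f' x := (hf'.differentiable (by simp)) x
    rw [nb_eq, nb_eq, nb_eq]
    simp (disch := assumption) only [D_add]
    ring
  · intro c f g hf hg x
    have h1 : DifferentiableAt ℝ f x := (hf.differentiable (by simp)) x
    rw [nb_eq, nb_eq]
    simp (disch := assumption) only [D_smul]
    ring
  · intro f g g' hf hg hg' x
    have h1 : DifferentiableAt ℝ g x := (hg.differentiable (by simp)) x
    have h2 : DifferentiableAt ℝ g' x := (hg'.differentiable (by simp)) x
    rw [nb_eq, nb_eq, nb_eq]
    simp (disch := assumption) only [D_add]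
    ring
  · intro c f g hf hg x
    have h1 : DifferentiableAt ℝ g x := (hg.differentiable (by simp)) x
    rw [nb_eq, nb_eq]
    simp (disch := assumption) only [D_smul]
    ring
  · intro f g x
    rw [nb_eq, nb_eq]
    ring
  · intro f g h hf hg hh x
    rw [nb_eq lam φ f (nb lam φ g h) x, nb_eq lam φ h (nb lam φ f g) x,
      nb_eq lam φ g (nb lam φ h f) x]
    simp only [D_nb lam φ g h hlam hφ hg hh, D_nb lam φ f g hlam hφ hf hg,
      D_nb lam φ h f hlam hφ hh hf]
    rw [D_symm hφ 1 0 x, D_symm hφ 2 0 x, D_symm hφ 2 1 x,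
      D_symm hf 1 0 x, D_symm hf 2 0 x, D_symm hf 2 1 x,
      D_symm hg 1 0 x, D_symm hg 2 0 x, D_symm hg 2 1 x,
      D_symm hh 1 0 x, D_symm hh 2 0 x, D_symm hh 2 1 x]
    ring
end
end

section
/- Let v : ℝ × ℝ³ → ℝ³ be a smooth time-dependent vector field and let f, g : ℝ × ℝ³ → ℝ be smooth scalars advected by v (∂f/∂t + v·∇f = 0 and ∂g/∂t + v·∇g = 0). Then the Clebsch-type vector field C := ∇f × ∇g satisfies the frozen-field equation ∂C/∂t = ∇ × (v × C) at every point of ℝ × ℝ³. -/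
noncomputable section

open Matrix MeasureTheory

section ClebschHelpers

variable {a a' b b' c c' d e e' p p' h : ℝ × V3 → ℝ} {q : ℝ × V3} {i j k : Fin 3}

private lemma dslice (ha : DifferentiableAt ℝ a q) :
    DifferentiableAt ℝ (fun y => a (q.1, y)) q.2 :=
  ha.comp q.2 ((differentiableAt_const _).prodMk differentiableAt_id)

private lemma dsliceT (ha : DifferentiableAt ℝ a q) :
    DifferentiableAt ℝ (fun s => a (s, q.2)) q.1 :=
  ha.comp q.1 (differentiableAt_id.prodMk (differentiableAt_const _))

private lemma hasFDerivAt_slice (ha : DifferentiableAt ℝ a q) :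
    HasFDerivAt (fun y => a (q.1, y)) ((fderiv ℝ a q).comp (ContinuousLinearMap.inr ℝ ℝ V3)) q.2 :=
  ha.hasFDerivAt.comp q.2 ((hasFDerivAt_const q.1 q.2).prodMk (hasFDerivAt_id q.2))

private lemma pd_eq_s9 (ha : DifferentiableAt ℝ a q) : pd i a q = fderiv ℝ a q (0, e3 i) := by
  rw [pd, (hasFDerivAt_slice ha).fderiv]; rfl

private lemma dtS_eq_s9 (ha : DifferentiableAt ℝ a q) : dtS a q = fderiv ℝ a q (1, 0) := by
  have H : HasFDerivAt (fun s => a (s, q.2))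
      ((fderiv ℝ a q).comp (ContinuousLinearMap.inl ℝ ℝ V3)) q.1 :=
    ha.hasFDerivAt.comp q.1 ((hasFDerivAt_id q.1).prodMk (hasFDerivAt_const q.2 q.1))
  rw [dtS, H.hasDerivAt.deriv]; rfl

private lemma contDiff_pd (hh : ContDiff ℝ (⊤ : ℕ∞) h) (j : Fin 3) :
    ContDiff ℝ (⊤ : ℕ∞) (fun r => pd j h r) := by
  have : (fun r => pd j h r) = fun r => fderiv ℝ h r (0, e3 j) :=
    funext fun r => pd_eq_s9 (hh.differentiable (by simp) r)
  rw [this]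
  exact (hh.fderiv_right (by simp)).clm_apply contDiff_const

private lemma sym2 (hh : ContDiff ℝ (⊤ : ℕ∞) h) (w w' : ℝ × V3) :
    fderiv ℝ (fderiv ℝ h) q w w' = fderiv ℝ (fderiv ℝ h) q w' w :=
  second_derivative_symmetric (fun y => (hh.differentiable (by simp) y).hasFDerivAt)
    (((hh.fderiv_right (m := 1) (by exact WithTop.coe_le_coe.2 le_top)).differentiable one_ne_zero q).hasFDerivAt) w w'

private lemma deriv_dir_eq (hh : ContDiff ℝ (⊤ : ℕ∞) h) (w : ℝ × V3) :
    fderiv ℝ (fun r => fderiv ℝ h r w) q = (fderiv ℝ (fderiv ℝ h) q).flip w := by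
  rw [show (fun r => fderiv ℝ h r w) = fun r => (fderiv ℝ h r) ((fun _ => w) r) from rfl,
    fderiv_clm_apply ((hh.fderiv_right (m := 1) (by exact WithTop.coe_le_coe.2 le_top)).differentiable one_ne_zero q) (differentiableAt_const w)]
  simp

private lemma pd_pd_eq (hh : ContDiff ℝ (⊤ : ℕ∞) h) :
    pd k (fun r => pd j h r) q = fderiv ℝ (fderiv ℝ h) q (0, e3 k) (0, e3 j) := by
  rw [pd_eq_s9 ((contDiff_pd hh j).differentiable (by simp) q),
    show (fun r => pd j h r) = fun r => fderiv ℝ h r (0, e3 j) from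
      funext fun r => pd_eq_s9 (hh.differentiable (by simp) r),
    deriv_dir_eq hh]
  rfl

private lemma dtS_pd_eq (hh : ContDiff ℝ (⊤ : ℕ∞) h) :
    dtS (fun r => pd j h r) q = fderiv ℝ (fderiv ℝ h) q (1, 0) (0, e3 j) := by
  rw [dtS_eq_s9 ((contDiff_pd hh j).differentiable (by simp) q),
    show (fun r => pd j h r) = fun r => fderiv ℝ h r (0, e3 j) from
      funext fun r => pd_eq_s9 (hh.differentiable (by simp) r),
    deriv_dir_eq hh]
  rfl

private lemma pd_dtS_eq (hh : ContDiff ℝ (⊤ : ℕ∞) h) :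
    pd j (fun r => dtS h r) q = fderiv ℝ (fderiv ℝ h) q (0, e3 j) (1, 0) := by
  have hfun : (fun r => dtS h r) = fun r => fderiv ℝ h r (1, 0) :=
    funext fun r => dtS_eq_s9 (hh.differentiable (by simp) r)
  have hd : ContDiff ℝ (⊤ : ℕ∞) (fun r => dtS h r) := by
    rw [hfun]; exact (hh.fderiv_right (by simp)).clm_apply contDiff_const
  rw [pd_eq_s9 (hd.differentiable (by simp) q), hfun, deriv_dir_eq hh]
  rfl

private lemma dtS_pd_swap (hh : ContDiff ℝ (⊤ : ℕ∞) h) :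
    dtS (fun r => pd j h r) q = pd j (fun r => dtS h r) q := by
  rw [dtS_pd_eq hh, pd_dtS_eq hh, sym2 hh]

private lemma pd_pd_swap (hh : ContDiff ℝ (⊤ : ℕ∞) h) :
    pd k (fun r => pd j h r) q = pd j (fun r => pd k h r) q := by
  rw [pd_pd_eq hh, pd_pd_eq hh, sym2 hh]

private lemma dtS_mulsub (ha : DifferentiableAt ℝ a q) (hb : DifferentiableAt ℝ b q)
    (hc : DifferentiableAt ℝ c q) (hd : DifferentiableAt ℝ d q) :
    dtS (fun r => a r * b r - c r * d r) q
      = dtS a q * b q + a q * dtS b q - (dtS c q * d q + c q * dtS d q) := by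
  have ha' := dsliceT ha; have hb' := dsliceT hb; have hc' := dsliceT hc; have hd' := dsliceT hd
  rw [dtS, dtS, dtS, dtS, dtS]
  rw [deriv_fun_sub (ha'.fun_mul hb') (hc'.fun_mul hd'), deriv_fun_mul ha' hb', deriv_fun_mul hc' hd']

private lemma pd_negsum3mul (ha : DifferentiableAt ℝ a q) (ha' : DifferentiableAt ℝ a' q)
    (hb : DifferentiableAt ℝ b q) (hb' : DifferentiableAt ℝ b' q)
    (hc : DifferentiableAt ℝ c q) (hc' : DifferentiableAt ℝ c' q) :
    pd k (fun r => -(a r * a' r + (b r * b' r + c r * c' r))) q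
      = -((pd k a q * a' q + a q * pd k a' q)
        + ((pd k b q * b' q + b q * pd k b' q) + (pd k c q * c' q + c q * pd k c' q))) := by
  have Ha := dslice ha; have Ha' := dslice ha'; have Hb := dslice hb
  have Hb' := dslice hb'; have Hc := dslice hc; have Hc' := dslice hc'
  simp only [pd]
  rw [fderiv_fun_neg, fderiv_fun_add (Ha.fun_mul Ha') ((Hb.fun_mul Hb').fun_add (Hc.fun_mul Hc')),
    fderiv_fun_add (Hb.fun_mul Hb') (Hc.fun_mul Hc'), fderiv_fun_mul Ha Ha', fderiv_fun_mul Hb Hb',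
    fderiv_fun_mul Hc Hc']
  simp [mul_comm]
  ring

private lemma pd_vcross (ha : DifferentiableAt ℝ a q)
    (hb : DifferentiableAt ℝ b q) (hb' : DifferentiableAt ℝ b' q)
    (hc : DifferentiableAt ℝ c q) (hc' : DifferentiableAt ℝ c' q)
    (hd : DifferentiableAt ℝ d q)
    (he : DifferentiableAt ℝ e q) (he' : DifferentiableAt ℝ e' q)
    (hp : DifferentiableAt ℝ p q) (hp' : DifferentiableAt ℝ p' q) :
    pd k (fun r => a r * (b r * b' r - c r * c' r) - d r * (e r * e' r - p r * p' r)) q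
      = pd k a q * (b q * b' q - c q * c' q)
        + a q * ((pd k b q * b' q + b q * pd k b' q) - (pd k c q * c' q + c q * pd k c' q))
        - (pd k d q * (e q * e' q - p q * p' q)
          + d q * ((pd k e q * e' q + e q * pd k e' q)
            - (pd k p q * p' q + p q * pd k p' q))) := by
  have Ha := dslice ha; have Hb := dslice hb; have Hb' := dslice hb'
  have Hc := dslice hc; have Hc' := dslice hc'; have Hd := dslice hd
  have He := dslice he; have He' := dslice he'; have Hp := dslice hp; have Hp' := dslice hp'
  simp only [pd]
  rw [fderiv_fun_sub (Ha.fun_mul ((Hb.fun_mul Hb').fun_sub (Hc.fun_mul Hc'))) (Hd.fun_mul ((He.fun_mul He').fun_sub (Hp.fun_mul Hp'))),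
    fderiv_fun_mul Ha ((Hb.fun_mul Hb').fun_sub (Hc.fun_mul Hc')),
    fderiv_fun_mul Hd ((He.fun_mul He').fun_sub (Hp.fun_mul Hp')),
    fderiv_fun_sub (Hb.fun_mul Hb') (Hc.fun_mul Hc'), fderiv_fun_sub (He.fun_mul He') (Hp.fun_mul Hp'),
    fderiv_fun_mul Hb Hb', fderiv_fun_mul Hc Hc', fderiv_fun_mul He He', fderiv_fun_mul Hp Hp']
  simp
  ring

end ClebschHelpers

/-- If `f` and `g` are smooth scalars advected by a smooth `v`, then the
Clebsch-type vector field `C = ∇f × ∇g` satisfies the frozen-field equation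
`∂C/∂t = ∇ × (v × C)` everywhere. -/
theorem clebsch_field_frozen
    (v : ℝ × V3 → V3) (f g : ℝ × V3 → ℝ)
    (hv : ContDiff ℝ (⊤ : ℕ∞) v) (hf : ContDiff ℝ (⊤ : ℕ∞) f) (hg : ContDiff ℝ (⊤ : ℕ∞) g)
    (haf : ∀ q, dtS f q + adv v f q = 0)
    (hag : ∀ q, dtS g q + adv v g q = 0) :
    ∀ q i, dtV (fun r => crossProduct (grad3 f r) (grad3 g r)) q i
      = curl3 (fun r => crossProduct (v r) (crossProduct (grad3 f r) (grad3 g r))) q i := by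
  intro q i
  have hVc : ∀ j : Fin 3, ContDiff ℝ (⊤ : ℕ∞) (fun r => v r j) := fun j => contDiff_pi.1 hv j
  have dV : ∀ (j : Fin 3) (r), DifferentiableAt ℝ (fun r' => v r' j) r :=
    fun j r => (hVc j).differentiable (by simp) r
  have dF : ∀ (j : Fin 3) (r), DifferentiableAt ℝ (fun r' => pd j f r') r :=
    fun j r => (contDiff_pd hf j).differentiable (by simp) r
  have dG : ∀ (j : Fin 3) (r), DifferentiableAt ℝ (fun r' => pd j g r') r :=
    fun j r => (contDiff_pd hg j).differentiable (by simp) r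
  have ef : (fun r => dtS f r)
      = fun r => -(v r 0 * pd 0 f r + (v r 1 * pd 1 f r + v r 2 * pd 2 f r)) := by
    funext r
    have := haf r; simp only [adv, Fin.sum_univ_three] at this; linarith
  have eg : (fun r => dtS g r)
      = fun r => -(v r 0 * pd 0 g r + (v r 1 * pd 1 g r + v r 2 * pd 2 g r)) := by
    funext r
    have := hag r; simp only [adv, Fin.sum_univ_three] at this; linarith
  have keyf : ∀ jj : Fin 3, dtS (fun r => pd jj f r) q
      = -((pd jj (fun r => v r 0) q * pd 0 f q + v q 0 * pd jj (fun r => pd 0 f r) q)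
        + ((pd jj (fun r => v r 1) q * pd 1 f q + v q 1 * pd jj (fun r => pd 1 f r) q)
          + (pd jj (fun r => v r 2) q * pd 2 f q + v q 2 * pd jj (fun r => pd 2 f r) q))) := by
    intro jj
    rw [dtS_pd_swap hf, ef]
    exact pd_negsum3mul (dV 0 q) (dF 0 q) (dV 1 q) (dF 1 q) (dV 2 q) (dF 2 q)
  have keyg : ∀ jj : Fin 3, dtS (fun r => pd jj g r) q
      = -((pd jj (fun r => v r 0) q * pd 0 g q + v q 0 * pd jj (fun r => pd 0 g r) q)
        + ((pd jj (fun r => v r 1) q * pd 1 g q + v q 1 * pd jj (fun r => pd 1 g r) q)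
          + (pd jj (fun r => v r 2) q * pd 2 g q + v q 2 * pd jj (fun r => pd 2 g r) q))) := by
    intro jj
    rw [dtS_pd_swap hg, eg]
    exact pd_negsum3mul (dV 0 q) (dG 0 q) (dV 1 q) (dG 1 q) (dV 2 q) (dG 2 q)
  have sf10 : pd 1 (fun r => pd 0 f r) q = pd 0 (fun r => pd 1 f r) q := pd_pd_swap hf
  have sf20 : pd 2 (fun r => pd 0 f r) q = pd 0 (fun r => pd 2 f r) q := pd_pd_swap hf
  have sf21 : pd 2 (fun r => pd 1 f r) q = pd 1 (fun r => pd 2 f r) q := pd_pd_swap hf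
  have sg10 : pd 1 (fun r => pd 0 g r) q = pd 0 (fun r => pd 1 g r) q := pd_pd_swap hg
  have sg20 : pd 2 (fun r => pd 0 g r) q = pd 0 (fun r => pd 2 g r) q := pd_pd_swap hg
  have sg21 : pd 2 (fun r => pd 1 g r) q = pd 1 (fun r => pd 2 g r) q := pd_pd_swap hg
  fin_cases i <;>
    simp only [dtV, curl3, grad3, cross_apply, Fin.isValue, Matrix.cons_val_zero,
      Matrix.cons_val_one, Matrix.head_cons, Matrix.cons_val_two, Matrix.tail_cons,
      Fin.zero_eta, Fin.mk_one, Fin.reduceFinMk]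
  · rw [dtS_mulsub (dF 1 q) (dG 2 q) (dF 2 q) (dG 1 q), keyf 1, keyg 2, keyf 2, keyg 1,
      pd_vcross (dV 0 q) (dF 2 q) (dG 0 q) (dF 0 q) (dG 2 q)
        (dV 1 q) (dF 1 q) (dG 2 q) (dF 2 q) (dG 1 q),
      pd_vcross (dV 2 q) (dF 1 q) (dG 2 q) (dF 2 q) (dG 1 q)
        (dV 0 q) (dF 0 q) (dG 1 q) (dF 1 q) (dG 0 q)]
    simp only [sf10, sf20, sf21, sg10, sg20, sg21]
    ring
  · rw [dtS_mulsub (dF 2 q) (dG 0 q) (dF 0 q) (dG 2 q), keyf 2, keyg 0, keyf 0, keyg 2,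
      pd_vcross (dV 1 q) (dF 0 q) (dG 1 q) (dF 1 q) (dG 0 q)
        (dV 2 q) (dF 2 q) (dG 0 q) (dF 0 q) (dG 2 q),
      pd_vcross (dV 0 q) (dF 2 q) (dG 0 q) (dF 0 q) (dG 2 q)
        (dV 1 q) (dF 1 q) (dG 2 q) (dF 2 q) (dG 1 q)]
    simp only [sf10, sf20, sf21, sg10, sg20, sg21]
    ring
  · rw [dtS_mulsub (dF 0 q) (dG 1 q) (dF 1 q) (dG 0 q), keyf 0, keyg 1, keyf 1, keyg 0,
      pd_vcross (dV 2 q) (dF 1 q) (dG 2 q) (dF 2 q) (dG 1 q)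
        (dV 0 q) (dF 0 q) (dG 1 q) (dF 1 q) (dG 0 q),
      pd_vcross (dV 1 q) (dF 0 q) (dG 1 q) (dF 1 q) (dG 0 q)
        (dV 2 q) (dF 2 q) (dG 0 q) (dF 0 q) (dG 2 q)]
    simp only [sf10, sf20, sf21, sg10, sg20, sg21]
    ring
end
end

section
/- Let v, C : ℝ × ℝ³ → ℝ³ be smooth with C divergence-free (∇·C(t,·) = 0) and satisfying the frozen-field equation ∂C/∂t = ∇×(v×C). Then for every smooth gauge function λ : ℝ × ℝ³ → ℝ, setting χ := ∂λ/∂t + v·∇λ, the density ∇λ·C obeys the Eulerian conservation law ∂(∇λ·C)/∂t + ∇·( (∇λ·C) v − χ C ) = 0 at every point of ℝ × ℝ³. Thus each representative of the gauge class of potential one-forms, parametrized by λ ∈ C^∞(ℝ × ℝ³), yields a helicity-type conservation law in divergence form. -/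
noncomputable section

open Matrix MeasureTheory

def Dd (w : ℝ × V3) (f : ℝ × V3 → ℝ) : ℝ × V3 → ℝ := fun r => fderiv ℝ f r w

lemma Dd_contDiff {f : ℝ × V3 → ℝ} (hf : ContDiff ℝ (⊤ : ℕ∞) f) (w : ℝ × V3) :
    ContDiff ℝ (⊤ : ℕ∞) (Dd w f) :=
  (hf.fderiv_right (by simp)).clm_apply contDiff_const

@[fun_prop]
lemma Dd_differentiable {f : ℝ × V3 → ℝ} (hf : ContDiff ℝ (⊤ : ℕ∞) f) (w : ℝ × V3) :
    Differentiable ℝ (Dd w f) :=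
  (Dd_contDiff hf w).differentiable (by simp)

lemma pd_eq_Dd {f : ℝ × V3 → ℝ} (hf : Differentiable ℝ f) (i : Fin 3) (q : ℝ × V3) :
    pd i f q = Dd (0, e3 i) f q := by
  have h := ((hf q).hasFDerivAt.comp q.2 (hasFDerivAt_prodMk_right (𝕜 := ℝ) q.1 q.2))
  have : fderiv ℝ (fun y => f (q.1, y)) q.2
      = (fderiv ℝ f q).comp (ContinuousLinearMap.inr ℝ ℝ V3) := h.fderiv
  simp [pd, Dd, this]

lemma dtS_eq_Dd {f : ℝ × V3 → ℝ} (hf : Differentiable ℝ f) (q : ℝ × V3) :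
    dtS f q = Dd (1, 0) f q := by
  have h := ((hf q).hasFDerivAt.comp q.1 (hasFDerivAt_prodMk_left (𝕜 := ℝ) q.1 q.2))
  have : deriv (fun s => f (s, q.2)) q.1 = fderiv ℝ f q ((1:ℝ), (0:V3)) := by
    have := h.hasDerivAt
    simp at this
    exact this.deriv
  simpa [dtS, Dd] using this

lemma Dd_add {q : ℝ × V3} {f g : ℝ × V3 → ℝ} (hf : DifferentiableAt ℝ f q)
    (hg : DifferentiableAt ℝ g q)
    (w : ℝ × V3) : Dd w (fun r => f r + g r) q = Dd w f q + Dd w g q := by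
  simp [Dd, fderiv_fun_add hf hg]

lemma Dd_sub {q : ℝ × V3} {f g : ℝ × V3 → ℝ} (hf : DifferentiableAt ℝ f q)
    (hg : DifferentiableAt ℝ g q)
    (w : ℝ × V3) : Dd w (fun r => f r - g r) q = Dd w f q - Dd w g q := by
  simp [Dd, fderiv_fun_sub hf hg]

lemma Dd_mul {q : ℝ × V3} {f g : ℝ × V3 → ℝ} (hf : DifferentiableAt ℝ f q)
    (hg : DifferentiableAt ℝ g q)
    (w : ℝ × V3) : Dd w (fun r => f r * g r) q = Dd w f q * g q + f q * Dd w g q := by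
  simp [Dd, fderiv_fun_mul hf hg, mul_comm]
  ring

lemma Dd_comm {f : ℝ × V3 → ℝ} (hf : ContDiff ℝ (⊤ : ℕ∞) f) (w w' : ℝ × V3) (q : ℝ × V3) :
    Dd w (Dd w' f) q = Dd w' (Dd w f) q := by
  have h1 : ∀ r, HasFDerivAt f (fderiv ℝ f r) r := fun r => (hf.differentiable (by simp) r).hasFDerivAt
  have h2 : HasFDerivAt (fderiv ℝ f) (fderiv ℝ (fderiv ℝ f) q) q :=
    (((hf.fderiv_right (m := 1) (WithTop.coe_le_coe.mpr le_top)).differentiable (by simp)) q).hasFDerivAt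
  have key : ∀ a b : ℝ × V3, Dd a (Dd b f) q = fderiv ℝ (fderiv ℝ f) q a b := by
    intro a b
    have h3 : HasFDerivAt (fun r => fderiv ℝ f r b)
        ((ContinuousLinearMap.apply ℝ ℝ b).comp (fderiv ℝ (fderiv ℝ f) q)) q :=
      (ContinuousLinearMap.apply ℝ ℝ b).hasFDerivAt.comp q h2
    show fderiv ℝ (fun r => fderiv ℝ f r b) q a = _
    rw [h3.fderiv]; rfl
  rw [key, key, second_derivative_symmetric h1 h2 w' w]


/-- Let `C` be divergence-free and frozen-in (`∂C/∂t = ∇×(v×C)`). Then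
for every smooth gauge function `λ`, with `χ = ∂λ/∂t + v·∇λ`, the density `∇λ·C` obeys
the Eulerian conservation law `∂(∇λ·C)/∂t + ∇·((∇λ·C) v − χ C) = 0` everywhere: each
representative of the gauge class of potential one-forms yields a helicity-type
conservation law in divergence form. -/
theorem gauge_class_eulerian_laws
    (v C : ℝ × V3 → V3)
    (hv : ContDiff ℝ (⊤ : ℕ∞) v) (hC : ContDiff ℝ (⊤ : ℕ∞) C)
    (hdC : ∀ q, div3 C q = 0)
    (hfrozen : ∀ q i, dtV C q i = curl3 (fun r => crossProduct (v r) (C r)) q i) :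
    ∀ lam : ℝ × V3 → ℝ, ContDiff ℝ (⊤ : ℕ∞) lam →
      ∀ q, dtS (fun r => grad3 lam r ⬝ᵥ C r) q
        + div3 (fun r => (grad3 lam r ⬝ᵥ C r) • v r
            - (dtS lam r + adv v lam r) • C r) q = 0 := by
  intro lam hlam q
  have hld : Differentiable ℝ lam := hlam.differentiable (by simp)
  have hC0 : ContDiff ℝ (⊤ : ℕ∞) fun r : ℝ × V3 => C r 0 := contDiff_pi.mp hC 0
  have hC1 : ContDiff ℝ (⊤ : ℕ∞) fun r : ℝ × V3 => C r 1 := contDiff_pi.mp hC 1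
  have hC2 : ContDiff ℝ (⊤ : ℕ∞) fun r : ℝ × V3 => C r 2 := contDiff_pi.mp hC 2
  have hv0 : ContDiff ℝ (⊤ : ℕ∞) fun r : ℝ × V3 => v r 0 := contDiff_pi.mp hv 0
  have hv1 : ContDiff ℝ (⊤ : ℕ∞) fun r : ℝ × V3 => v r 1 := contDiff_pi.mp hv 1
  have hv2 : ContDiff ℝ (⊤ : ℕ∞) fun r : ℝ × V3 => v r 2 := contDiff_pi.mp hv 2
  have hC0d : Differentiable ℝ fun r : ℝ × V3 => C r 0 := hC0.differentiable (by simp)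
  have hC1d : Differentiable ℝ fun r : ℝ × V3 => C r 1 := hC1.differentiable (by simp)
  have hC2d : Differentiable ℝ fun r : ℝ × V3 => C r 2 := hC2.differentiable (by simp)
  have hv0d : Differentiable ℝ fun r : ℝ × V3 => v r 0 := hv0.differentiable (by simp)
  have hv1d : Differentiable ℝ fun r : ℝ × V3 => v r 1 := hv1.differentiable (by simp)
  have hv2d : Differentiable ℝ fun r : ℝ × V3 => v r 2 := hv2.differentiable (by simp)
  have egrad : ∀ r, grad3 lam r ⬝ᵥ C r
      = Dd (0, e3 0) lam r * C r 0 + Dd (0, e3 1) lam r * C r 1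
        + Dd (0, e3 2) lam r * C r 2 := by
    intro r
    simp [grad3, dotProduct, Fin.sum_univ_three, pd_eq_Dd hld]
  have echi : ∀ r, dtS lam r + adv v lam r
      = Dd ((1:ℝ), (0:V3)) lam r + (v r 0 * Dd (0, e3 0) lam r
        + v r 1 * Dd (0, e3 1) lam r + v r 2 * Dd (0, e3 2) lam r) := by
    intro r
    simp [adv, Fin.sum_univ_three, pd_eq_Dd hld, dtS_eq_Dd hld]
  have eG : ∀ j : Fin 3, (fun r => ((grad3 lam r ⬝ᵥ C r) • v r
        - (dtS lam r + adv v lam r) • C r) j)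
      = fun r => (Dd (0, e3 0) lam r * C r 0 + Dd (0, e3 1) lam r * C r 1
          + Dd (0, e3 2) lam r * C r 2) * v r j
        - (Dd ((1:ℝ), (0:V3)) lam r + (v r 0 * Dd (0, e3 0) lam r
          + v r 1 * Dd (0, e3 1) lam r + v r 2 * Dd (0, e3 2) lam r)) * C r j := by
    intro j
    funext r
    simp [egrad r, echi r]
  rw [show (fun r => grad3 lam r ⬝ᵥ C r)
      = (fun r => Dd (0, e3 0) lam r * C r 0 + Dd (0, e3 1) lam r * C r 1
        + Dd (0, e3 2) lam r * C r 2) from funext egrad]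
  simp only [div3, Fin.sum_univ_three]
  rw [eG 0, eG 1, eG 2]
  rw [dtS_eq_Dd (by fun_prop) q]
  rw [pd_eq_Dd (f := fun r => (Dd (0, e3 0) lam r * C r 0 + Dd (0, e3 1) lam r * C r 1
          + Dd (0, e3 2) lam r * C r 2) * v r 0
        - (Dd ((1:ℝ), (0:V3)) lam r + (v r 0 * Dd (0, e3 0) lam r
          + v r 1 * Dd (0, e3 1) lam r + v r 2 * Dd (0, e3 2) lam r)) * C r 0) (by fun_prop) 0 q]
  rw [pd_eq_Dd (f := fun r => (Dd (0, e3 0) lam r * C r 0 + Dd (0, e3 1) lam r * C r 1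
          + Dd (0, e3 2) lam r * C r 2) * v r 1
        - (Dd ((1:ℝ), (0:V3)) lam r + (v r 0 * Dd (0, e3 0) lam r
          + v r 1 * Dd (0, e3 1) lam r + v r 2 * Dd (0, e3 2) lam r)) * C r 1) (by fun_prop) 1 q]
  rw [pd_eq_Dd (f := fun r => (Dd (0, e3 0) lam r * C r 0 + Dd (0, e3 1) lam r * C r 1
          + Dd (0, e3 2) lam r * C r 2) * v r 2
        - (Dd ((1:ℝ), (0:V3)) lam r + (v r 0 * Dd (0, e3 0) lam r
          + v r 1 * Dd (0, e3 1) lam r + v r 2 * Dd (0, e3 2) lam r)) * C r 2) (by fun_prop) 2 q]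
  simp (disch := fun_prop) only [Dd_sub, Dd_add, Dd_mul]
  have csym : ∀ (a b : Fin 3), Dd (0, e3 a) (Dd (0, e3 b) lam) q
      = Dd (0, e3 b) (Dd (0, e3 a) lam) q := fun a b => Dd_comm hlam _ _ q
  have ct : ∀ a : Fin 3, Dd (0, e3 a) (Dd ((1:ℝ), (0:V3)) lam) q
      = Dd ((1:ℝ), (0:V3)) (Dd (0, e3 a) lam) q := fun a => Dd_comm hlam _ _ q
  rw [ct 0, ct 1, ct 2, csym 1 0, csym 2 0, csym 2 1]
  have hd : Dd (0, e3 0) (fun r => C r 0) q + Dd (0, e3 1) (fun r => C r 1) q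
      + Dd (0, e3 2) (fun r => C r 2) q = 0 := by
    have h := hdC q
    simpa only [div3, Fin.sum_univ_three, pd_eq_Dd hC0d, pd_eq_Dd hC1d, pd_eq_Dd hC2d] using h
  have hf0 := hfrozen q 0
  have hf1 := hfrozen q 1
  have hf2 := hfrozen q 2
  simp only [dtV, curl3, cross_apply, Matrix.cons_val_zero, Matrix.cons_val_one,
    Matrix.head_cons, Matrix.cons_val_two, Matrix.tail_cons] at hf0 hf1 hf2
  simp (disch := fun_prop) only [dtS_eq_Dd, pd_eq_Dd, Dd_sub, Dd_mul] at hf0 hf1 hf2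
  linear_combination (Dd (0, e3 0) lam q) * hf0 + (Dd (0, e3 1) lam q) * hf1
    + (Dd (0, e3 2) lam q) * hf2 - (Dd ((1:ℝ), (0:V3)) lam q) * hd
end
end
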